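/- arXiv:2408.02918 — 7 statements merged into one kernel-verified Lean document; each statement's English description precedes it below -/
import Mathlib

section
/- Define polynomials F_m(S,T) by the recursion F_0(S,T)=1, F_1(S,T)=S, and F_{m+1}(S,T)=(S-T)·F_m(S,T) − T²·F_{m-1}(S,T). Then for all natural numbers m and all elements u,v of a commutative ring, F_m(u²+uv+v², uv) = Σ_{i=0}^{2m} u^i v^{2m−i}. -/
/-- The polynomials `F m S T` defined by `F 0 = 1`, `F 1 = S`,
`F (m+1) = (S - T) * F m - T^2 * F (m-1)`. -/
def F {R : Type*} [CommRing R] : ℕ → R → R → R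
  | 0, _, _ => 1
  | 1, S, _ => S
  | (m + 2), S, T => (S - T) * F (m + 1) S T - T ^ 2 * F m S T

lemma stepA {R : Type*} [CommRing R] (u v : R) (n : ℕ) :
    ∑ i ∈ Finset.range (n + 2), u ^ i * v ^ (n + 1 - i)
      = u * (∑ i ∈ Finset.range (n + 1), u ^ i * v ^ (n - i)) + v ^ (n + 1) := by
  rw [Finset.sum_range_succ', Finset.mul_sum]
  simp only [Nat.succ_sub_succ, pow_succ, pow_zero, one_mul, Nat.sub_zero]
  congr 1
  exact Finset.sum_congr rfl fun i _ => by ring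

lemma keySum {R : Type*} [CommRing R] (u v : R) (n : ℕ) :
    ∑ i ∈ Finset.range (n + 5), u ^ i * v ^ (n + 4 - i)
      = (u ^ 2 + v ^ 2) * (∑ i ∈ Finset.range (n + 3), u ^ i * v ^ (n + 2 - i))
        - u ^ 2 * v ^ 2 * (∑ i ∈ Finset.range (n + 1), u ^ i * v ^ (n - i)) := by
  have h1 : ∑ i ∈ Finset.range (n + 5), u ^ i * v ^ (n + 4 - i)
      = u * (∑ i ∈ Finset.range (n + 4), u ^ i * v ^ (n + 3 - i)) + v ^ (n + 4) :=
    stepA u v (n + 3)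
  have h2 : ∑ i ∈ Finset.range (n + 4), u ^ i * v ^ (n + 3 - i)
      = u * (∑ i ∈ Finset.range (n + 3), u ^ i * v ^ (n + 2 - i)) + v ^ (n + 3) :=
    stepA u v (n + 2)
  have h3 : ∑ i ∈ Finset.range (n + 3), u ^ i * v ^ (n + 2 - i)
      = u * (∑ i ∈ Finset.range (n + 2), u ^ i * v ^ (n + 1 - i)) + v ^ (n + 2) :=
    stepA u v (n + 1)
  have h4 : ∑ i ∈ Finset.range (n + 2), u ^ i * v ^ (n + 1 - i)
      = u * (∑ i ∈ Finset.range (n + 1), u ^ i * v ^ (n - i)) + v ^ (n + 1) :=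
    stepA u v n
  linear_combination h1 + u * h2 - v ^ 2 * h3 - u * v ^ 2 * h4

/-- For all `m` and elements `u v` of a commutative ring,
`F m (u² + uv + v²) (uv) = ∑_{i=0}^{2m} uⁱ v^{2m-i}`. -/
theorem stmt0 {R : Type*} [CommRing R] (m : ℕ) (u v : R) :
    F m (u ^ 2 + u * v + v ^ 2) (u * v) =
      ∑ i ∈ Finset.range (2 * m + 1), u ^ i * v ^ (2 * m - i) := by
  induction m using Nat.twoStepInduction with
  | zero => simp [F]
  | one =>
    simp only [F]
    rw [show 2 * 1 + 1 = 3 from rfl]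
    simp [Finset.sum_range_succ]
    ring
  | more m ih1 ih2 =>
    show (_ - _) * F (m + 1) _ _ - _ ^ 2 * F m _ _ = _
    rw [ih1, ih2]
    have key : ∑ i ∈ Finset.range (2 * m + 5), u ^ i * v ^ (2 * m + 4 - i)
        = (u ^ 2 + v ^ 2) * (∑ i ∈ Finset.range (2 * m + 3), u ^ i * v ^ (2 * m + 2 - i))
          - u ^ 2 * v ^ 2 * (∑ i ∈ Finset.range (2 * m + 1), u ^ i * v ^ (2 * m - i)) :=
      keySum u v (2 * m)
    have e1 : 2 * (m + 2) + 1 = 2 * m + 5 := by ring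
    have e2 : 2 * (m + 2) = 2 * m + 4 := by ring
    have e3 : 2 * (m + 1) + 1 = 2 * m + 3 := by ring
    have e4 : 2 * (m + 1) = 2 * m + 2 := by ring
    rw [e1, e2, e3, e4, key]
    ring
end

section
/- For all natural numbers k and elements u,v of a commutative ring, Σ_{i=0}^{k} u^i v^{k−i} = Σ_{j=0}^{⌊k/2⌋} (−1)^j · C(k−j, j) · (uv)^j · (u+v)^{k−2j}, where C(n,m) denotes the binomial coefficient. -/
open Finset

private def Lf {R : Type*} [CommRing R] (u v : R) (k : ℕ) : R :=
  ∑ i ∈ range (k + 1), u ^ i * v ^ (k - i)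

private def Rg {R : Type*} [CommRing R] (u v : R) (k : ℕ) : R :=
  ∑ j ∈ range (k / 2 + 1),
    (-1) ^ j * ((k - j).choose j : R) * (u * v) ^ j * (u + v) ^ (k - 2 * j)

private lemma Lf_succ {R : Type*} [CommRing R] (u v : R) (k : ℕ) :
    Lf u v (k + 1) = u * Lf u v k + v ^ (k + 1) := by
  rw [Lf, Lf, Finset.sum_range_succ', Finset.mul_sum]
  simp only [Nat.succ_sub_succ, pow_zero, one_mul, Nat.sub_zero]
  congr 1
  apply Finset.sum_congr rfl
  intro i _
  ring

private lemma Lrec {R : Type*} [CommRing R] (u v : R) (k : ℕ) :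
    Lf u v (k + 2) = (u + v) * Lf u v (k + 1) - u * v * Lf u v k := by
  have h1 := Lf_succ u v (k + 1)
  have h2 := Lf_succ u v k
  rw [show k + 2 = k + 1 + 1 from rfl, h1, h2]
  ring

private lemma Rrec {R : Type*} [CommRing R] (u v : R) (k : ℕ) :
    Rg u v (k + 2) = (u + v) * Rg u v (k + 1) - u * v * Rg u v k := by
  have h2 : (k + 2) / 2 = k / 2 + 1 := by omega
  rw [Rg, Rg, Rg, h2, Finset.mul_sum, Finset.mul_sum]
  have hA : ∑ j ∈ range ((k + 1) / 2 + 1),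
      (u + v) * ((-1) ^ j * (((k + 1) - j).choose j : R) * (u * v) ^ j * (u + v) ^ ((k + 1) - 2 * j))
      = ∑ j ∈ range (k / 2 + 1 + 1),
        (-1) ^ j * (((k + 1) - j).choose j : R) * (u * v) ^ j * (u + v) ^ ((k + 2) - 2 * j) := by
    have hsub : range ((k + 1) / 2 + 1) ⊆ range (k / 2 + 1 + 1) := by
      intro x hx; simp only [Finset.mem_range] at *; omega
    calc ∑ j ∈ range ((k + 1) / 2 + 1),
          (u + v) * ((-1) ^ j * (((k + 1) - j).choose j : R) * (u * v) ^ j *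
            (u + v) ^ ((k + 1) - 2 * j))
        = ∑ j ∈ range ((k + 1) / 2 + 1),
            (-1) ^ j * (((k + 1) - j).choose j : R) * (u * v) ^ j *
              (u + v) ^ ((k + 2) - 2 * j) := by
          apply Finset.sum_congr rfl
          intro j hj
          simp only [Finset.mem_range] at hj
          have e : (k + 2) - 2 * j = ((k + 1) - 2 * j) + 1 := by omega
          rw [e, pow_succ]
          ring
      _ = ∑ j ∈ range (k / 2 + 1 + 1),
            (-1) ^ j * (((k + 1) - j).choose j : R) * (u * v) ^ j *
              (u + v) ^ ((k + 2) - 2 * j) := by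
          apply Finset.sum_subset hsub
          intro j hj hj'
          simp only [Finset.mem_range] at hj hj'
          rw [Nat.choose_eq_zero_of_lt (by omega : (k + 1) - j < j)]
          simp
  rw [hA, eq_sub_iff_add_eq, Finset.sum_range_succ' _ (k / 2 + 1),
    Finset.sum_range_succ' (fun j => (-1) ^ j * (((k + 1) - j).choose j : R) * (u * v) ^ j * (u + v) ^ ((k + 2) - 2 * j)) (k / 2 + 1)]
  rw [add_right_comm, ← Finset.sum_add_distrib]
  congr 1
  · apply Finset.sum_congr rfl
    intro j hj
    simp only [Finset.mem_range] at hj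
    have e1 : k + 2 - (j + 1) = (k - j) + 1 := by omega
    have e2 : k + 2 - 2 * (j + 1) = k - 2 * j := by omega
    have e3 : (k + 1) - (j + 1) = k - j := by omega
    rw [e1, e2, e3, Nat.choose_succ_succ]
    push_cast
    ring

private lemma main_eq {R : Type*} [CommRing R] (u v : R) : ∀ k, Lf u v k = Rg u v k
  | 0 => by simp [Lf, Rg]
  | 1 => by
      simp [Lf, Rg, Finset.sum_range_succ]
      ring
  | (k + 2) => by
      rw [Lrec, Rrec, main_eq u v (k + 1), main_eq u v k]

/-- `∑_{i=0}^{k} uⁱ v^{k-i} = ∑_{j=0}^{⌊k/2⌋} (-1)ʲ C(k-j, j) (uv)ʲ (u+v)^{k-2j}` in any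
commutative ring. -/
theorem stmt1 {R : Type*} [CommRing R] (k : ℕ) (u v : R) :
    ∑ i ∈ Finset.range (k + 1), u ^ i * v ^ (k - i) =
      ∑ j ∈ Finset.range (k / 2 + 1),
        (-1) ^ j * ((k - j).choose j : R) * (u * v) ^ j * (u + v) ^ (k - 2 * j) := by
  exact main_eq u v k
end

section
/- For every natural number n and every element x of a commutative ring, Σ_{k=0}^{n} C(n,k)·C(n+k,k)·(−x)^k = (−1)^n · Σ_{k=0}^{n} C(n,k)·C(n+k,k)·(x−1)^k. -/
/-! Both sides are values of the binary form `L n a b = ∑ C(n,j)² aʲ bⁿ⁻ʲ`: Vandermonde's identity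
`C(n+k,k) = ∑ⱼ C(n,j) C(k,j)`, an exchange of summations and the binomial theorem turn
`∑ₖ C(n,k) C(n+k,k) yᵏ` into `L n y (1 + y)`. The reflection `x ↦ 1 - x` then comes from the
symmetry `L n a b = L n b a` and the homogeneity `L n (c a) (c b) = cⁿ L n a b`, taken at `c = -1`. -/

open Finset

theorem Nat.add_choose_eq_sum_choose_mul_choose (n k : ℕ) :
    (n + k).choose k = ∑ j ∈ range (n + 1), n.choose j * k.choose j := by
  rw [← Nat.choose_symm_add, Nat.add_choose_eq, Nat.sum_antidiagonal_eq_sum_range_succ_mk,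
    ← sum_range_reflect]
  refine sum_congr rfl fun j hj => ?_
  have hjn : j ≤ n := Nat.lt_succ_iff.mp (mem_range.mp hj)
  simp only [Nat.succ_sub_one, Nat.sub_sub_self hjn, Nat.choose_symm hjn]

section CommSemiring

variable {R : Type*} [CommSemiring R]

theorem sum_range_choose_mul_choose_mul_pow (n j : ℕ) (y : R) :
    ∑ k ∈ range (n + 1), (n.choose k : R) * (k.choose j : R) * y ^ k =
      (n.choose j : R) * y ^ j * (1 + y) ^ (n - j) := by
  obtain hnj | ⟨m, rfl⟩ := (lt_or_ge n j).imp id Nat.exists_eq_add_of_le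
  · rw [Nat.choose_eq_zero_of_lt hnj, Nat.cast_zero, zero_mul, zero_mul]
    refine sum_eq_zero fun k hk => ?_
    rw [Nat.choose_eq_zero_of_lt (by grind : k < j), Nat.cast_zero, mul_zero, zero_mul]
  · rw [add_assoc, sum_range_add, sum_eq_zero fun k hk => by
      simp [Nat.choose_eq_zero_of_lt (mem_range.mp hk)], zero_add, Nat.add_sub_cancel_left,
      add_comm 1 y, add_pow, mul_sum]
    refine sum_congr rfl fun i _ => ?_
    have hchoose : (j + m).choose (j + i) * (j + i).choose j = (j + m).choose j * m.choose i := by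
      rw [Nat.choose_mul (Nat.le_add_right j i), Nat.add_sub_cancel_left, Nat.add_sub_cancel_left]
    rw [one_pow, mul_one, pow_add, ← mul_assoc _ (_ : R), ← Nat.cast_mul, hchoose, Nat.cast_mul]
    ring

-- `legendreForm n x (x - 1)` is the shifted Legendre polynomial `P̃ₙ(x)`.
def legendreForm (n : ℕ) (a b : R) : R :=
  ∑ j ∈ range (n + 1), (n.choose j : R) ^ 2 * a ^ j * b ^ (n - j)

theorem legendreForm_comm (n : ℕ) (a b : R) : legendreForm n a b = legendreForm n b a := by
  rw [legendreForm, ← sum_range_reflect]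
  refine sum_congr rfl fun j hj => ?_
  have hjn : j ≤ n := Nat.lt_succ_iff.mp (mem_range.mp hj)
  rw [Nat.add_sub_cancel, Nat.sub_sub_self hjn, Nat.choose_symm hjn, mul_right_comm]

theorem legendreForm_mul_mul (n : ℕ) (c a b : R) :
    legendreForm n (c * a) (c * b) = c ^ n * legendreForm n a b := by
  rw [legendreForm, legendreForm, mul_sum]
  refine sum_congr rfl fun j hj => ?_
  have hjn : j ≤ n := Nat.lt_succ_iff.mp (mem_range.mp hj)
  rw [mul_pow, mul_pow, ← Nat.add_sub_of_le hjn, pow_add, Nat.add_sub_cancel_left]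
  ring

theorem sum_range_choose_mul_add_choose_mul_pow (n : ℕ) (y : R) :
    ∑ k ∈ range (n + 1), (n.choose k : R) * ((n + k).choose k : R) * y ^ k =
      legendreForm n y (1 + y) := by
  simp_rw [Nat.add_choose_eq_sum_choose_mul_choose, Nat.cast_sum, Nat.cast_mul, mul_sum,
    sum_mul]
  rw [sum_comm, legendreForm]
  refine sum_congr rfl fun j _ => ?_
  rw [sq, mul_assoc _ _ (y ^ j), mul_assoc (n.choose j : R), ← sum_range_choose_mul_choose_mul_pow,
    mul_sum]
  exact sum_congr rfl fun k _ => by ring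

end CommSemiring

/-- Reflection symmetry of the terminating series `₂F₁(-n, n+1; 1; x)` under `x ↦ 1 - x`:
`∑_{k=0}^{n} C(n,k) C(n+k,k) (-x)^k = (-1)^n ∑_{k=0}^{n} C(n,k) C(n+k,k) (x-1)^k`. -/
theorem stmt2 {R : Type*} [CommRing R] (n : ℕ) (x : R) :
    ∑ k ∈ Finset.range (n + 1), (n.choose k : R) * ((n + k).choose k : R) * (-x) ^ k =
      (-1) ^ n * ∑ k ∈ Finset.range (n + 1),
        (n.choose k : R) * ((n + k).choose k : R) * (x - 1) ^ k := by
  rw [sum_range_choose_mul_add_choose_mul_pow, sum_range_choose_mul_add_choose_mul_pow,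
    add_sub_cancel, legendreForm_comm n (x - 1), ← legendreForm_mul_mul]
  congr 1 <;> ring
end

section
/- Let 0 → H → G → G/H → 0 be an exact sequence of groups, k an algebraically closed field, and ρ: G → GL(V), σ: G → GL(W) finite-dimensional representations over k such that the restrictions ρ|_H and σ|_H are irreducible and isomorphic as H-representations. Then there exists a character (one-dimensional representation) χ of G/H such that σ ≅ ρ ⊗ (χ ∘ b), where b: G → G/H is the quotient map. -/
/-!
Transport `σ` to `V` along `e`, so that `σ = ρ` on `H`. For each `g`, the operator
`σ g * ρ g⁻¹` commutes with `ρ h` for `h ∈ H`, because `g⁻¹ h g ∈ H` and `σ = ρ` there;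
by Schur's lemma it is a scalar `χ g`. Then `σ (a * b) = σ a * σ b` forces `χ` to be
multiplicative, and `σ = ρ` on `H` forces `χ = 1` there, so `χ` factors through `G ⧸ H`.
-/

open Module

theorem Module.End.exists_eq_smul_one_of_forall_commute {k V : Type*} [Field k]
    [IsAlgClosed k] [AddCommGroup V] [Module k V] [FiniteDimensional k V] [Nontrivial V]
    (S : Set (End k V)) (hS : ∀ U : Submodule k V, (∀ s ∈ S, ∀ v ∈ U, s v ∈ U) → U = ⊥ ∨ U = ⊤)
    {u : End k V} (hu : ∀ s ∈ S, Commute u s) : ∃ c : k, u = c • 1 := by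
  obtain ⟨c, hc⟩ := u.exists_eigenvalue
  have hstable : ∀ s ∈ S, ∀ v ∈ u.eigenspace c, s v ∈ u.eigenspace c := by
    intro s hs v hv
    rw [End.mem_eigenspace_iff] at hv ⊢
    rw [← End.mul_apply, hu s hs, End.mul_apply, hv, map_smul]
  have htop : u.eigenspace c = ⊤ := (hS _ hstable).resolve_left hc
  refine ⟨c, LinearMap.ext fun v => ?_⟩
  simpa using End.mem_eigenspace_iff.mp (htop ▸ Submodule.mem_top : v ∈ u.eigenspace c)

namespace Representation

variable {k G V : Type*} [Field k] [Group G] [AddCommGroup V] [Module k V]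

theorem exists_character_of_forall_eq_smul [Nontrivial V] {ρ σ : Representation k G V}
    (h : ∀ g, ∃ c : k, σ g = c • ρ g) : ∃ χ : G →* kˣ, ∀ g, σ g = (χ g : k) • ρ g := by
  choose c hc using h
  have hρ : ∀ g, ρ g ≠ 0 := fun g => ((Group.isUnit g).map ρ).ne_zero
  have hc_eq : ∀ g a, σ g = a • ρ g → c g = a := fun g a ha =>
    smul_left_injective k (hρ g) ((hc g).symm.trans ha)
  let χ : G →* k :=
    { toFun := c
      map_one' := hc_eq 1 1 (by simp)
      map_mul' := fun a b => hc_eq _ _ (by rw [map_mul, map_mul, hc a, hc b, smul_mul_smul]) }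
  exact ⟨χ.toHomUnits, hc⟩

theorem exists_smul_of_eqOn_normal [IsAlgClosed k] [FiniteDimensional k V]
    [Nontrivial V] (H : Subgroup G) [H.Normal] {ρ σ : Representation k G V}
    (hρ : ∀ U : Submodule k V, (∀ h ∈ H, ∀ v ∈ U, ρ h v ∈ U) → U = ⊥ ∨ U = ⊤)
    (hH : ∀ h ∈ H, σ h = ρ h) (g : G) : ∃ c : k, σ g = c • ρ g := by
  have hcomm : ∀ s ∈ ρ '' H, Commute (σ g * ρ g⁻¹) s := by
    rintro _ ⟨h, hh, rfl⟩
    have hconj : g⁻¹ * h * g ∈ H := by simpa using ‹H.Normal›.conj_mem h hh g⁻¹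
    calc σ g * ρ g⁻¹ * ρ h = σ g * ρ (g⁻¹ * h * g) * ρ g⁻¹ := by
          rw [mul_assoc, mul_assoc, ← map_mul, ← map_mul]; congr 2; group
      _ = σ g * σ (g⁻¹ * h * g) * ρ g⁻¹ := by rw [hH _ hconj]
      _ = σ h * σ g * ρ g⁻¹ := by
        rw [← map_mul, ← map_mul, show g * (g⁻¹ * h * g) = h * g by group]
      _ = ρ h * (σ g * ρ g⁻¹) := by rw [hH h hh, mul_assoc]
  obtain ⟨c, hc⟩ := Module.End.exists_eq_smul_one_of_forall_commute (ρ '' H)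
    (fun U hU => hρ U fun h hh => hU (ρ h) ⟨h, hh, rfl⟩) hcomm
  refine ⟨c, ?_⟩
  calc σ g = σ g * ρ g⁻¹ * ρ g := by rw [mul_assoc, ← map_mul, inv_mul_cancel, map_one, mul_one]
    _ = c • ρ g := by rw [hc, smul_one_mul]

theorem exists_character_of_eqOn_normal [IsAlgClosed k] [FiniteDimensional k V]
    [Nontrivial V] (H : Subgroup G) [H.Normal] {ρ σ : Representation k G V}
    (hρ : ∀ U : Submodule k V, (∀ h ∈ H, ∀ v ∈ U, ρ h v ∈ U) → U = ⊥ ∨ U = ⊤)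
    (hH : ∀ h ∈ H, σ h = ρ h) : ∃ χ : G →* kˣ, H ≤ χ.ker ∧ ∀ g, σ g = (χ g : k) • ρ g := by
  obtain ⟨χ, hχ⟩ := exists_character_of_forall_eq_smul (exists_smul_of_eqOn_normal H hρ hH)
  refine ⟨χ, fun h hh => ?_, hχ⟩
  have hρh : ρ h ≠ 0 := ((Group.isUnit h).map ρ).ne_zero
  have hχh : (χ h : k) • ρ h = (1 : k) • ρ h := by rw [← hχ h, hH h hh, one_smul]
  exact Units.ext (smul_left_injective k hρh hχh)

end Representation

theorem stmt11_general (k : Type*) [Field k] [IsAlgClosed k]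
    (G : Type*) [Group G] (H : Subgroup G) [H.Normal]
    (V W : Type*) [AddCommGroup V] [Module k V] [AddCommGroup W] [Module k W]
    [FiniteDimensional k V]
    (ρ : G →* (V →ₗ[k] V)) (σ : G →* (W →ₗ[k] W))
    -- the restriction of `ρ` to `H` is irreducible
    (hρ : Nontrivial V ∧ ∀ U : Submodule k V, (∀ h ∈ H, ∀ v ∈ U, ρ h v ∈ U) → U = ⊥ ∨ U = ⊤)
    -- the restrictions to `H` are isomorphic as `H`-representations
    (e : V ≃ₗ[k] W) (he : ∀ h ∈ H, ∀ v, e (ρ h v) = σ h (e v)) :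
    ∃ (χ : G ⧸ H →* kˣ) (f : V ≃ₗ[k] W),
      ∀ g v, σ g (f v) = (χ (QuotientGroup.mk g) : k) • f (ρ g v) := by
  obtain ⟨_, hρ⟩ := hρ
  let σV : Representation k G V := e.symm.conjRingEquiv.toMonoidHom.comp σ
  have hσV : ∀ g v, σV g v = e.symm (σ g (e v)) := fun _ _ => rfl
  have hH : ∀ h ∈ H, σV h = ρ h := fun h hh => LinearMap.ext fun v => by
    rw [hσV, ← he h hh, e.symm_apply_apply]
  obtain ⟨χ, hker, hχ⟩ := Representation.exists_character_of_eqOn_normal H hρ hH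
  refine ⟨QuotientGroup.lift H χ hker, e, fun g v => ?_⟩
  rw [QuotientGroup.lift_mk, ← map_smul, ← LinearMap.smul_apply, ← hχ g, hσV, e.apply_symm_apply]

/-- Clifford-theory lemma: if `ρ : G → GL(V)` and `σ : G → GL(W)` are finite-dimensional
representations over an algebraically closed field whose restrictions to a normal subgroup `H`
are irreducible and isomorphic, then `σ ≅ ρ ⊗ χ` for some character `χ` of `G/H`. -/
theorem stmt11 (k : Type*) [Field k] [IsAlgClosed k]
    (G : Type*) [Group G] (H : Subgroup G) [H.Normal]
    (V W : Type*) [AddCommGroup V] [Module k V] [AddCommGroup W] [Module k W]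
    [FiniteDimensional k V] [FiniteDimensional k W]
    (ρ : G →* (V →ₗ[k] V)) (σ : G →* (W →ₗ[k] W))
    -- the restriction of `ρ` to `H` is irreducible
    (hρ : Nontrivial V ∧ ∀ U : Submodule k V, (∀ h ∈ H, ∀ v ∈ U, ρ h v ∈ U) → U = ⊥ ∨ U = ⊤)
    -- the restriction of `σ` to `H` is irreducible
    (hσ : Nontrivial W ∧ ∀ U : Submodule k W, (∀ h ∈ H, ∀ w ∈ U, σ h w ∈ U) → U = ⊥ ∨ U = ⊤)
    -- the restrictions to `H` are isomorphic as `H`-representations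
    (e : V ≃ₗ[k] W) (he : ∀ h ∈ H, ∀ v, e (ρ h v) = σ h (e v)) :
    ∃ (χ : G ⧸ H →* kˣ) (f : V ≃ₗ[k] W),
      ∀ g v, σ g (f v) = (χ (QuotientGroup.mk g) : k) • f (ρ g v) :=
  stmt11_general k G H V W ρ σ hρ e he
end

section
/- Let p be an odd prime, φ the quadratic character of F_p^× and χ any multiplicative character of F_p^× with χ² nontrivial (characters extended by value 0 at 0). Then Σ_{s∈F_p} Σ_{t∈F_p} φ((1−t)·s·(s−1))·χ(s·t) = φ(−1)·J(φ,χ)·J(φχ,φ), where J(A,B)=Σ_{x∈F_p} A(x)B(1−x), and this quantity equals p. -/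
/-!
Since `φ(s - 1) = φ(-1) φ(1 - s)`, the summand is a product of a function of `t` and a function
of `s`, so the double sum is `φ(-1) J(χ,φ) J(φχ,φ)`, and `J(χ,φ) = J(φ,χ)`. With Gauss sums, `g(φχ) J(φ,χ) = g(φ) g(χ)` and, since `φχ · φ = χ`,
`g(χ) J(φχ,φ) = g(φχ) g(φ)`; multiplying the two and cancelling `g(φχ) g(χ) ≠ 0` leaves
`J(φ,χ) J(φχ,φ) = g(φ)² = φ(-1) p`.
-/

open Finset

section Factorization

variable {R R' : Type*} [CommRing R] [Fintype R] [CommRing R']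

theorem sum_sum_apply_mul_eq_jacobiSum_mul_jacobiSum (φ χ : MulChar R R') :
    ∑ s : R, ∑ t : R, φ ((1 - t) * s * (s - 1)) * χ (s * t) =
      φ (-1) * jacobiSum φ χ * jacobiSum (φ * χ) φ := by
  have hsplit : ∀ s t : R, φ ((1 - t) * s * (s - 1)) * χ (s * t) =
      (χ t * φ (1 - t)) * (φ (-1) * ((φ * χ) s * φ (1 - s))) := by
    intro s t
    have hneg : φ (s - 1) = φ (-1) * φ (1 - s) := by rw [← map_mul, neg_one_mul, neg_sub]
    rw [map_mul, map_mul, map_mul, MulChar.mul_apply, hneg]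
    ring
  simp_rw [hsplit, ← sum_mul, ← mul_sum]
  rw [← jacobiSum, jacobiSum_comm, ← jacobiSum]
  ring

end Factorization

section GaussSum

variable {F R : Type*} [Field F] [Fintype F] [Field R]

theorem jacobiSum_mul_jacobiSum_mul_of_isQuadratic (hcard : (Fintype.card F : R) ≠ 0)
    {φ χ : MulChar F R} (hφ : φ ≠ 1) (hφq : φ.IsQuadratic) (hχ : χ ^ 2 ≠ 1)
    {ψ : AddChar F R} (hψ : ψ.IsPrimitive) :
    jacobiSum φ χ * jacobiSum (φ * χ) φ = φ (-1) * Fintype.card F := by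
  have hφχφ : φ * χ * φ = χ := by rw [mul_right_comm, ← sq, hφq.sq_eq_one, one_mul]
  have hφχ : φ * χ ≠ 1 := by
    intro h
    rw [← hφχφ, h, one_mul, hφq.sq_eq_one] at hχ
    exact hχ rfl
  have hχ1 : χ ≠ 1 := by
    rintro rfl
    exact hχ (one_pow 2)
  have hg₁ := jacobiSum_mul_nontrivial hφχ ψ
  have hg₂ := jacobiSum_mul_nontrivial (hφχφ.symm ▸ hχ1) ψ
  rw [hφχφ] at hg₂
  have hg : gaussSum (φ * χ) ψ * gaussSum χ ψ ≠ 0 :=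
    mul_ne_zero (gaussSum_ne_zero_of_nontrivial hcard hφχ hψ)
      (gaussSum_ne_zero_of_nontrivial hcard hχ1 hψ)
  refine mul_left_cancel₀ hg ?_
  calc gaussSum (φ * χ) ψ * gaussSum χ ψ * (jacobiSum φ χ * jacobiSum (φ * χ) φ)
      = (gaussSum (φ * χ) ψ * jacobiSum φ χ) * (gaussSum χ ψ * jacobiSum (φ * χ) φ) := by ring
    _ = gaussSum (φ * χ) ψ * gaussSum χ ψ * gaussSum φ ψ ^ 2 := by rw [hg₁, hg₂]; ring
    _ = gaussSum (φ * χ) ψ * gaussSum χ ψ * (φ (-1) * Fintype.card F) := by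
      rw [gaussSum_sq hφ hφq hψ]

end GaussSum

theorem stmt14_general (p : ℕ) [Fact p.Prime]
    (φ χ : MulChar (ZMod p) ℂ) (hφ1 : φ ≠ 1) (hφ2 : φ ^ 2 = 1) (hχ : χ ^ 2 ≠ 1) :
    ((∑ s : ZMod p, ∑ t : ZMod p, φ ((1 - t) * s * (s - 1)) * χ (s * t)) =
      φ (-1) * (∑ x : ZMod p, φ x * χ (1 - x)) * (∑ x : ZMod p, (φ * χ) x * φ (1 - x))) ∧
    (∑ s : ZMod p, ∑ t : ZMod p, φ ((1 - t) * s * (s - 1)) * χ (s * t)) = p := by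
  have hfactor := sum_sum_apply_mul_eq_jacobiSum_mul_jacobiSum φ χ
  have hcard : (Fintype.card (ZMod p) : ℂ) ≠ 0 := by
    rw [ZMod.card]
    exact_mod_cast (Fact.out : p.Prime).ne_zero
  have hJ := jacobiSum_mul_jacobiSum_mul_of_isQuadratic hcard hφ1
    (MulChar.isQuadratic_iff_sq_eq_one.mpr hφ2) hχ (ZMod.isPrimitive_stdAddChar p)
  refine ⟨hfactor, ?_⟩
  rw [hfactor, mul_assoc, hJ, ← mul_assoc, ← sq, ← map_pow, neg_one_sq, map_one, one_mul,
    ZMod.card]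

/-- For `φ` the quadratic character and `χ` with `χ²` nontrivial,
`∑_{s,t} φ((1-t)s(s-1)) χ(st) = φ(-1) J(φ,χ) J(φχ,φ)`, and this equals `p`. -/
theorem stmt14 (p : ℕ) [Fact p.Prime] (hp : p ≠ 2)
    (φ χ : MulChar (ZMod p) ℂ) (hφ1 : φ ≠ 1) (hφ2 : φ ^ 2 = 1) (hχ : χ ^ 2 ≠ 1) :
    ((∑ s : ZMod p, ∑ t : ZMod p, φ ((1 - t) * s * (s - 1)) * χ (s * t)) =
      φ (-1) * (∑ x : ZMod p, φ x * χ (1 - x)) * (∑ x : ZMod p, (φ * χ) x * φ (1 - x))) ∧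
    (∑ s : ZMod p, ∑ t : ZMod p, φ ((1 - t) * s * (s - 1)) * χ (s * t)) = p :=
  stmt14_general p φ χ hφ1 hφ2 hχ
end

section
/- For all complex numbers a, b and all t in the open unit disc for which all series converge, the Euler transformation holds: ₂F₁(a, b; c; t) = (1−t)^{c−a−b} · ₂F₁(c−a, c−b; c; t), where ₂F₁(a,b;c;t) = Σ_{k≥0} ((a)_k (b)_k / ((c)_k k!)) t^k with (x)_k the Pochhammer symbol, provided c is not a nonpositive integer. -/
/-!
Both sides are power series in `t` converging on the unit disc. By the binomial theorem
`(1 - t) ^ (c - a - b) = ₂F₁(a + b - c, 1; 1; t)`, so after a Cauchy product the claim becomes the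
coefficient identity (a case of Pfaff–Saalschütz)
`∑ₖ (c - a)ₖ (c - b)ₖ / ((c)ₖ k!) · (a + b - c)ₙ₋ₖ / (n - k)! = (a)ₙ (b)ₙ / ((c)ₙ n!)`.
Both sides are `1` at `n = 0`, and the left side satisfies the first-order recurrence
`(n + 1) (c + n) uₙ₊₁ = (a + n) (b + n) uₙ` of the right side, by a telescoping certificate.
-/

open Finset

section Convolution

variable {R : Type*} [CommRing R] {a b c : R} {β v : ℕ → R}

theorem mul_sum_range_succ_mul_eq_of_recurrence
    (hβ : ∀ j : ℕ, (j + 1 : R) * β (j + 1) = (a + b - c + j) * β j)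
    (hv : ∀ k : ℕ, (k + 1 : R) * (c + k) * v (k + 1) = (c - a + k) * (c - b + k) * v k) (n : ℕ) :
    (n + 1 : R) * (c + n) * ∑ k ∈ range (n + 2), v k * β (n + 1 - k) =
      (a + n) * (b + n) * ∑ k ∈ range (n + 1), v k * β (n - k) := by
  -- Zeilberger's certificate for the recurrence of the convolution.
  set T : ℕ → R := fun k => -(k * (c + k - 1)) * (v k * β (n + 1 - k))
  have step : ∀ k ∈ range (n + 1), (n + 1 : R) * (c + n) * (v k * β (n + 1 - k)) -
      (a + n) * (b + n) * (v k * β (n - k)) = T (k + 1) - T k := by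
    intro k hk
    obtain ⟨j, rfl⟩ := Nat.exists_eq_add_of_le' (mem_range_succ_iff.mp hk)
    simp only [T, show j + k + 1 - k = j + 1 by omega, show j + k + 1 - (k + 1) = j by omega,
      Nat.add_sub_cancel]
    push_cast
    linear_combination (c + j + 2 * k) * v k * hβ j + β j * hv k
  have telescope : (n + 1 : R) * (c + n) * ∑ k ∈ range (n + 1), v k * β (n + 1 - k) -
      (a + n) * (b + n) * ∑ k ∈ range (n + 1), v k * β (n - k) = T (n + 1) - T 0 := by
    rw [mul_sum, mul_sum, ← sum_sub_distrib, ← sum_range_sub]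
    exact sum_congr rfl step
  simp only [T, Nat.sub_self, Nat.cast_zero, zero_mul, neg_zero, sub_zero] at telescope
  rw [sum_range_succ, Nat.sub_self]
  push_cast at telescope
  linear_combination telescope

end Convolution

section Coefficients

variable {𝕂 : Type*} [Field 𝕂] [CharZero 𝕂]

theorem ordinaryHypergeometricCoefficient_succ (a b : 𝕂) {c : 𝕂} {n : ℕ} (hc : c + n ≠ 0) :
    (n + 1 : 𝕂) * (c + n) * ordinaryHypergeometricCoefficient a b c (n + 1) =
      (a + n) * (b + n) * ordinaryHypergeometricCoefficient a b c n := by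
  simp only [ordinaryHypergeometricCoefficient, ascPochhammer_succ_eval, Nat.factorial_succ,
    Nat.cast_mul, mul_inv]
  push_cast
  field_simp

theorem eq_ordinaryHypergeometricCoefficient_of_recurrence {a b c : 𝕂}
    (hc : ∀ n : ℕ, c ≠ -n) {u : ℕ → 𝕂} (h0 : u 0 = 1)
    (hu : ∀ n : ℕ, (n + 1 : 𝕂) * (c + n) * u (n + 1) = (a + n) * (b + n) * u n) (n : ℕ) :
    u n = ordinaryHypergeometricCoefficient a b c n := by
  induction n with
  | zero => simp [h0, ordinaryHypergeometricCoefficient]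
  | succ n ih =>
    have hcn : c + n ≠ 0 := fun h => hc n (eq_neg_of_add_eq_zero_left h)
    refine mul_left_cancel₀ (mul_ne_zero n.cast_add_one_ne_zero hcn) ?_
    rw [hu, ordinaryHypergeometricCoefficient_succ a b hcn, ih]

theorem sum_range_ordinaryHypergeometricCoefficient_mul_binomial (a b : 𝕂) {c : 𝕂}
    (hc : ∀ n : ℕ, c ≠ -n) (n : ℕ) :
    ∑ k ∈ range (n + 1), ordinaryHypergeometricCoefficient (c - a) (c - b) c k *
      ordinaryHypergeometricCoefficient (a + b - c) 1 1 (n - k) =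
      ordinaryHypergeometricCoefficient a b c n := by
  refine eq_ordinaryHypergeometricCoefficient_of_recurrence hc
    (u := fun n => ∑ k ∈ range (n + 1), ordinaryHypergeometricCoefficient (c - a) (c - b) c k *
      ordinaryHypergeometricCoefficient (a + b - c) 1 1 (n - k))
    (by simp [ordinaryHypergeometricCoefficient]) (fun n => ?_) n
  refine mul_sum_range_succ_mul_eq_of_recurrence (fun j => ?_) (fun k => ?_) n
  · have hj : (1 + j : 𝕂) ≠ 0 := by norm_cast; omega
    refine mul_right_cancel₀ hj ?_
    linear_combination ordinaryHypergeometricCoefficient_succ (a + b - c) 1 hj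
  · simpa only [sub_sub_cancel] using
      ordinaryHypergeometricCoefficient_succ (c - a) (c - b) (c := c) (n := k)
        fun h => hc k (eq_neg_of_add_eq_zero_left h)

end Coefficients

section Series

variable {𝕂 𝔸 : Type*} [RCLike 𝕂] [NormedDivisionRing 𝔸] [NormedAlgebra 𝕂 𝔸]

theorem one_le_ordinaryHypergeometricSeries_radius (a b : 𝕂) {c : 𝕂} (hc : ∀ n : ℕ, c ≠ -n) :
    1 ≤ (ordinaryHypergeometricSeries 𝔸 a b c).radius := by
  by_cases ha : ∃ k : ℕ, a = -k
  · obtain ⟨k, rfl⟩ := ha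
    simp [ordinaryHypergeometric_radius_top_of_neg_nat₁]
  by_cases hb : ∃ k : ℕ, b = -k
  · obtain ⟨k, rfl⟩ := hb
    simp [ordinaryHypergeometric_radius_top_of_neg_nat₂]
  push Not at ha hb
  refine (ordinaryHypergeometricSeries_radius_eq_one 𝔸 a b c fun k => ?_).ge
  refine ⟨fun h => ha k ?_, fun h => hb k ?_, fun h => hc k ?_⟩ <;> linear_combination h

theorem summable_norm_ordinaryHypergeometricSeries (a b : 𝕂) {c : 𝕂} (hc : ∀ n : ℕ, c ≠ -n)
    {x : 𝔸} (hx : ‖x‖ < 1) :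
    Summable fun n => ‖ordinaryHypergeometricSeries 𝔸 a b c n fun _ => x‖ := by
  refine FormalMultilinearSeries.summable_norm_apply _ (lt_of_lt_of_le ?_
    (one_le_ordinaryHypergeometricSeries_radius a b hc))
  rw [edist_zero_right, ← ofReal_norm]
  exact ENNReal.ofReal_lt_one.mpr hx

end Series

namespace Complex

theorem one_sub_cpow_eq_ordinaryHypergeometric (e : ℂ) {t : ℂ} (ht : ‖t‖ < 1) :
    (1 - t) ^ e = ₂F₁ (-e) 1 1 t := by
  have hsum := (one_add_cpow_hasFPowerSeriesOnBall_zero (a := e)).hasSum (y := -t)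
    (by rw [Metric.mem_eball, edist_zero_right, enorm_neg, ← ofReal_norm]
        exact ENNReal.ofReal_lt_one.mpr ht)
  rw [binomialSeries_eq_ordinaryHypergeometricSeries (b := (1 : ℂ)) (fun k => by norm_cast)]
    at hsum
  rw [ordinaryHypergeometric, FormalMultilinearSeries.sum, sub_eq_add_neg, ← zero_add (-t),
    ← hsum.tsum_eq]
  refine tsum_congr fun n => ?_
  rw [FormalMultilinearSeries.compContinuousLinearMap_apply]
  congr
  ext
  simp

theorem ordinaryHypergeometric_eq_one_sub_cpow_mul (a b : ℂ) {c t : ℂ}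
    (hc : ∀ n : ℕ, c ≠ -n) (ht : ‖t‖ < 1) :
    ₂F₁ a b c t = (1 - t) ^ (c - a - b) * ₂F₁ (c - a) (c - b) c t := by
  have hone (n : ℕ) : (1 : ℂ) ≠ -n := by
    rw [ne_eq, eq_neg_iff_add_eq_zero]
    norm_cast
    omega
  have hF := summable_norm_ordinaryHypergeometricSeries (c - a) (c - b) hc ht
  have hB := summable_norm_ordinaryHypergeometricSeries (a + b - c) (1 : ℂ) hone ht
  rw [one_sub_cpow_eq_ordinaryHypergeometric _ ht, mul_comm, show -(c - a - b) = a + b - c by ring,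
    ordinaryHypergeometric, ordinaryHypergeometric, ordinaryHypergeometric,
    FormalMultilinearSeries.sum, FormalMultilinearSeries.sum, FormalMultilinearSeries.sum,
    tsum_mul_tsum_eq_tsum_sum_range_of_summable_norm hF hB]
  refine tsum_congr fun n => ?_
  simp only [ordinaryHypergeometricSeries, FormalMultilinearSeries.ofScalars_apply_eq, smul_eq_mul]
  rw [← sum_range_ordinaryHypergeometricCoefficient_mul_binomial a b hc n, sum_mul]
  refine sum_congr rfl fun k hk => ?_
  rw [← pow_mul_pow_sub t (mem_range_succ_iff.mp hk)]
  ring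

end Complex

theorem stmt18_general (a b c t : ℂ) (ht : ‖t‖ < 1) (hc : ∀ n : ℕ, c ≠ -(n : ℂ)) :
    (∑' k : ℕ, (ascPochhammer ℂ k).eval a * (ascPochhammer ℂ k).eval b /
        ((ascPochhammer ℂ k).eval c * (k.factorial : ℂ)) * t ^ k) =
      (1 - t) ^ (c - a - b) *
        ∑' k : ℕ, (ascPochhammer ℂ k).eval (c - a) * (ascPochhammer ℂ k).eval (c - b) /
          ((ascPochhammer ℂ k).eval c * (k.factorial : ℂ)) * t ^ k := by
  have euler := Complex.ordinaryHypergeometric_eq_one_sub_cpow_mul a b hc ht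
  simpa only [ordinaryHypergeometric_eq_tsum, smul_eq_mul, div_eq_mul_inv, mul_inv, mul_assoc, mul_comm,
    mul_left_comm] using euler

/-- Euler's transformation `₂F₁(a,b;c;t) = (1-t)^{c-a-b} ₂F₁(c-a,c-b;c;t)` for `|t| < 1`,
`c` not a nonpositive integer, and convergent series. -/
theorem stmt18 (a b c t : ℂ) (ht : ‖t‖ < 1) (hc : ∀ n : ℕ, c ≠ -(n : ℂ))
    (h1 : Summable fun k : ℕ =>
      (ascPochhammer ℂ k).eval a * (ascPochhammer ℂ k).eval b /
        ((ascPochhammer ℂ k).eval c * (k.factorial : ℂ)) * t ^ k)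
    (h2 : Summable fun k : ℕ =>
      (ascPochhammer ℂ k).eval (c - a) * (ascPochhammer ℂ k).eval (c - b) /
        ((ascPochhammer ℂ k).eval c * (k.factorial : ℂ)) * t ^ k) :
    (∑' k : ℕ, (ascPochhammer ℂ k).eval a * (ascPochhammer ℂ k).eval b /
        ((ascPochhammer ℂ k).eval c * (k.factorial : ℂ)) * t ^ k) =
      (1 - t) ^ (c - a - b) *
        ∑' k : ℕ, (ascPochhammer ℂ k).eval (c - a) * (ascPochhammer ℂ k).eval (c - b) /
          ((ascPochhammer ℂ k).eval c * (k.factorial : ℂ)) * t ^ k :=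
  stmt18_general a b c t ht hc
end

section
/- Let p > 3 be a prime, φ the quadratic character of F_p^×, and for a multiplicative character χ define the Jacobi-sum quotient Q(χ) = g(χ⁴)·g(χ⁻¹)·g(χ⁻⁶) / (g(χ²)·g(χ⁻²)·g(χ⁻³)) using Gauss sums g over F_p with respect to a fixed nontrivial additive character (interpreting each factor via Gauss sums with the convention χ(0)=0). Then (p/(1−p))·Σ_χ Q(χ)·χ(27/4) = (2/p), the Legendre symbol of 2 modulo p. -/
/-!
Write `φ` for the quadratic character and `q` for the size of the field. The duplication
formula `g(χ²) g(φ) = χ(4) g(χ) g(χφ)`, a consequence of `χ(4) J(χ, χ) = J(χ, φ)`, rewrites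
the Gauss-sum quotient as `g(χ²φ) g(χ⁻³φ) / (g(φ) g(χ⁻¹φ))`, which for `χ ≠ φ` equals
`φ(-1) χ(-1) g(χφ) g(χ²φ) g(χ⁻³φ) / (q g(φ))`. Expanding the three Gauss sums, orthogonality
of characters turns `∑_χ χ(a) g(χφ) g(χ²φ) g(χ⁻³φ)` into
`(q - 1) φ(a) g(φ) ∑_w φ(w)² φ(1 + w + w³/a)`. For `a = -27/4` the cubic has a double root:
it is `-(4/27) (w - 3) (w + 3/2)²`, so the last sum is `-φ(-3) (φ(-3) + φ(-9/2))`. Adding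
back the exceptional character `χ = φ` by hand gives `-(q - 1)/q · φ(2)` over every finite
field of characteristic other than 2 and 3.
-/

open Finset

theorem MulChar.sum_apply_eq_ite {M R : Type*} [CommMonoid M] [Finite M] [CommRing R]
    [IsDomain R] [HasEnoughRootsOfUnity R (Monoid.exponent Mˣ)] [Fintype (MulChar M R)]
    [DecidableEq M] (a : M) :
    ∑ χ : MulChar M R, χ a = if a = 1 then (Nat.card Mˣ : R) else 0 := by
  split_ifs with ha
  · simp [ha, ← Nat.card_eq_fintype_card, MulChar.card_eq_card_units_of_hasEnoughRootsOfUnity]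
  · obtain ⟨χ, hχ⟩ := MulChar.exists_apply_ne_one_of_hasEnoughRootsOfUnity M R ha
    refine eq_zero_of_mul_eq_self_left hχ ?_
    simp only [mul_sum, ← MulChar.mul_apply]
    exact Fintype.sum_bijective _ (Group.mulLeft_bijective χ) _ _ fun _ ↦ rfl

lemma Finset.sum_ite_mul_eq_one {K R : Type*} [Field K] [Fintype K] [DecidableEq K]
    [AddCommMonoid R] (c : K) {f : K → R} (hf : f 0 = 0) :
    ∑ x, (if c * x = 1 then f x else 0) = f c⁻¹ := by
  rcases eq_or_ne c 0 with rfl | hc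
  · simp [hf]
  · simp_rw [(mul_eq_one_iff_inv_eq₀ hc).trans eq_comm, sum_ite_eq', mem_univ, if_true]

noncomputable def complexQuadraticChar (F : Type*) [Field F] [Fintype F] [DecidableEq F] :
    MulChar F ℂ :=
  (quadraticChar F).ringHomComp (Int.castRingHom ℂ)

section FiniteField

variable {F : Type*} [Field F] [Fintype F] {ψ : AddChar F ℂ}

local notation "q" => (Fintype.card F : ℂ)

noncomputable def gaussQuotient (ψ : AddChar F ℂ) (χ : MulChar F ℂ) : ℂ :=
  (gaussSum (χ ^ 4) ψ * gaussSum χ⁻¹ ψ * gaussSum ((χ ^ 6)⁻¹) ψ) /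
    (gaussSum (χ ^ 2) ψ * gaussSum ((χ ^ 2)⁻¹) ψ * gaussSum ((χ ^ 3)⁻¹) ψ)

lemma gaussSum_ne_zero_of_addChar_ne_one (hψ : ψ ≠ 1) (χ : MulChar F ℂ) :
    gaussSum χ ψ ≠ 0 := by
  rcases eq_or_ne χ 1 with rfl | hχ
  · rw [gaussSum_one_left hψ]
    exact neg_ne_zero.mpr one_ne_zero
  · exact gaussSum_ne_zero_of_nontrivial (Nat.cast_ne_zero.mpr Fintype.card_ne_zero) hχ
      (.of_ne_one hψ)

lemma gaussSum_mul_gaussSum_inv (hψ : ψ ≠ 1) {χ : MulChar F ℂ} (hχ : χ ≠ 1) :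
    gaussSum χ ψ * gaussSum χ⁻¹ ψ = χ (-1) * q := by
  rw [← mul_gaussSum_inv_eq_gaussSum χ⁻¹ ψ, mul_left_comm,
    gaussSum_mul_gaussSum_eq_card hχ (.of_ne_one hψ), MulChar.inv_apply', inv_neg_one]

lemma sum_mulChar_mul_addChar_mul {χ : MulChar F ℂ} (hχ : χ ≠ 1) (c : F) :
    ∑ y, χ y * ψ (c * y) = χ⁻¹ c * gaussSum χ ψ := by
  rcases eq_or_ne c 0 with rfl | hc
  · simp only [zero_mul, AddChar.map_zero_eq_one, mul_one, MulChar.map_zero]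
    exact MulChar.sum_eq_zero_of_ne_one hχ
  · rw [MulChar.inv_apply', gaussSum, mul_sum]
    refine Fintype.sum_equiv (Equiv.mulLeft₀ c hc) _ _ fun y ↦ ?_
    rw [Equiv.mulLeft₀_apply, ← mul_assoc, ← map_mul, inv_mul_cancel_left₀ hc]

variable [DecidableEq F]

local notation "φ" => complexQuadraticChar F

section QuadraticChar

lemma complexQuadraticChar_isQuadratic : (φ).IsQuadratic :=
  (quadraticChar_isQuadratic F).comp _

lemma complexQuadraticChar_ne_one (hF : ringChar F ≠ 2) : φ ≠ 1 :=
  (MulChar.ringHomComp_ne_one_iff Int.cast_injective).mpr (quadraticChar_ne_one hF)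

lemma complexQuadraticChar_inv : (φ)⁻¹ = φ :=
  complexQuadraticChar_isQuadratic.inv

lemma complexQuadraticChar_mul_self : φ * φ = 1 := by
  rw [← sq, complexQuadraticChar_isQuadratic.sq_eq_one]

lemma complexQuadraticChar_apply_inv (x : F) : φ x⁻¹ = φ x := by
  rw [← MulChar.inv_apply', complexQuadraticChar_inv]

lemma complexQuadraticChar_apply_sq {x : F} (hx : x ≠ 0) : φ x ^ 2 = 1 := by
  rw [complexQuadraticChar, MulChar.ringHomComp_apply, eq_intCast]
  exact_mod_cast quadraticChar_sq_one hx

lemma complexQuadraticChar_apply_pow_three (x : F) : φ x ^ 3 = φ x := by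
  rcases eq_or_ne x 0 with rfl | hx
  · rw [MulChar.map_zero, zero_pow three_ne_zero]
  · rw [pow_succ, complexQuadraticChar_apply_sq hx, one_mul]

lemma complexQuadraticChar_mul_sq (a : F) {x : F} (hx : x ≠ 0) : φ (a * x ^ 2) = φ a := by
  rw [map_mul, map_pow, complexQuadraticChar_apply_sq hx, mul_one]

lemma complexQuadraticChar_card_sqrts (hF : ringChar F ≠ 2) (u : F) :
    (#{s : F | s ^ 2 = u} : ℂ) = φ u + 1 := by
  have h := quadraticChar_card_sqrts hF u
  rw [Set.toFinset_ofPred] at h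
  rw [complexQuadraticChar, MulChar.ringHomComp_apply, eq_intCast]
  exact_mod_cast h

lemma MulChar.eq_one_or_eq_complexQuadraticChar (hF : ringChar F ≠ 2) {χ : MulChar F ℂ}
    (hχ : χ ^ 2 = 1) : χ = 1 ∨ χ = φ := by
  -- The character group is isomorphic to `Fˣ`, whose only element of order two is `-1`.
  obtain ⟨e⟩ := MulChar.mulEquiv_units F ℂ
  have h_neg_one : ∀ σ : MulChar F ℂ, σ ^ 2 = 1 → σ ≠ 1 → e σ = -1 := by
    intro σ hσ hσ1
    have hsq : ((e σ : Fˣ) : F) ^ 2 = 1 := by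
      rw [← Units.val_pow_eq_pow_val, ← map_pow, hσ, map_one, Units.val_one]
    refine Units.val_eq_neg_one.mp ((sq_eq_one_iff.mp hsq).resolve_left fun h ↦ hσ1 ?_)
    exact e.injective (by rw [map_one, Units.val_eq_one.mp h])
  by_contra! h
  exact h.2 (e.injective ((h_neg_one χ hχ h.1).trans
    (h_neg_one _ complexQuadraticChar_isQuadratic.sq_eq_one (complexQuadraticChar_ne_one hF)).symm))

end QuadraticChar

section Duplication

lemma MulChar.apply_four_mul_jacobiSum_self (hF : ringChar F ≠ 2) {χ : MulChar F ℂ}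
    (hχ : χ ≠ 1) : χ 4 * jacobiSum χ χ = jacobiSum χ φ := by
  calc χ 4 * jacobiSum χ χ = ∑ x : F, χ (1 - (2 * x - 1) ^ 2) := by
        rw [jacobiSum, mul_sum]
        refine sum_congr rfl fun x _ ↦ ?_
        rw [← map_mul, ← map_mul]
        ring_nf
    _ = ∑ s : F, χ (1 - s ^ 2) :=
        Fintype.sum_equiv ((Equiv.mulLeft₀ 2 (Ring.two_ne_zero hF)).trans (Equiv.subRight 1))
          _ _ fun _ ↦ rfl
    _ = ∑ u : F, (φ u + 1) * χ (1 - u) := by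
        rw [← sum_fiberwise univ (· ^ 2) fun s ↦ χ (1 - s ^ 2)]
        refine sum_congr rfl fun u _ ↦ ?_
        rw [← complexQuadraticChar_card_sqrts hF, ← nsmul_eq_mul, ← sum_const]
        exact sum_congr rfl fun s hs ↦ by rw [(mem_filter.mp hs).2]
    _ = jacobiSum χ φ := by
        rw [jacobiSum_comm, jacobiSum]
        simp only [add_mul, one_mul, sum_add_distrib]
        rw [add_eq_left]
        exact (Fintype.sum_equiv (Equiv.subLeft 1) _ χ fun _ ↦ rfl).trans
          (MulChar.sum_eq_zero_of_ne_one hχ)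

theorem gaussSum_pow_two_mul_gaussSum_complexQuadraticChar (hF : ringChar F ≠ 2)
    (hψ : ψ ≠ 1) (χ : MulChar F ℂ) :
    gaussSum (χ ^ 2) ψ * gaussSum φ ψ = χ 4 * (gaussSum χ ψ * gaussSum (χ * φ) ψ) := by
  have h2 : (2 : F) ≠ 0 := Ring.two_ne_zero hF
  have h4 : (4 : F) = 2 ^ 2 := by norm_num
  rcases eq_or_ne χ 1 with rfl | h1
  · rw [one_pow, one_mul, MulChar.one_apply (h4 ▸ (pow_ne_zero 2 h2).isUnit), one_mul]
  rcases eq_or_ne χ φ with rfl | hq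
  · rw [complexQuadraticChar_isQuadratic.sq_eq_one, complexQuadraticChar_mul_self, h4, map_pow,
      complexQuadraticChar_apply_sq h2]
    ring
  have hχχ : χ * χ ≠ 1 := by
    rw [← sq]
    intro h
    exact (MulChar.eq_one_or_eq_complexQuadraticChar hF h).elim h1 hq
  have hχφ : χ * φ ≠ 1 := fun h ↦
    hq (by rw [eq_inv_of_mul_eq_one_left h, complexQuadraticChar_inv])
  have e1 := jacobiSum_mul_nontrivial hχχ ψ
  have e2 := jacobiSum_mul_nontrivial hχφ ψ
  rw [← MulChar.apply_four_mul_jacobiSum_self hF h1] at e2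
  have hJ : jacobiSum χ χ ≠ 0 := by
    intro h
    rw [h, mul_zero] at e1
    exact mul_self_ne_zero.mpr (gaussSum_ne_zero_of_addChar_ne_one hψ χ) e1.symm
  apply mul_right_cancel₀ hJ
  rw [sq]
  linear_combination gaussSum φ ψ * e1 - gaussSum χ ψ * e2

end Duplication

section GaussQuotient

noncomputable def twistedGaussProduct (ψ : AddChar F ℂ) (χ : MulChar F ℂ) : ℂ :=
  gaussSum (χ * complexQuadraticChar F) ψ * gaussSum (χ ^ 2 * complexQuadraticChar F) ψ *
    gaussSum ((χ ^ 3)⁻¹ * complexQuadraticChar F) ψ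

theorem gaussQuotient_eq (hF : ringChar F ≠ 2) (hψ : ψ ≠ 1) (χ : MulChar F ℂ) :
    gaussQuotient ψ χ = gaussSum (χ ^ 2 * φ) ψ * gaussSum ((χ ^ 3)⁻¹ * φ) ψ /
      (gaussSum φ ψ * gaussSum (χ⁻¹ * φ) ψ) := by
  have HD := gaussSum_pow_two_mul_gaussSum_complexQuadraticChar hF hψ
  have e1 : gaussSum (χ ^ 4) ψ * gaussSum φ ψ =
      χ 4 ^ 2 * (gaussSum (χ ^ 2) ψ * gaussSum (χ ^ 2 * φ) ψ) := by
    rw [← MulChar.pow_apply' χ two_ne_zero, ← HD, ← pow_mul]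
  have e2 : gaussSum ((χ ^ 6)⁻¹) ψ * gaussSum φ ψ =
      χ⁻¹ 4 ^ 3 * (gaussSum ((χ ^ 3)⁻¹) ψ * gaussSum ((χ ^ 3)⁻¹ * φ) ψ) := by
    rw [← MulChar.pow_apply' _ three_ne_zero, inv_pow, ← HD, inv_pow, ← pow_mul]
  have e3 : gaussSum ((χ ^ 2)⁻¹) ψ * gaussSum φ ψ =
      χ⁻¹ 4 * (gaussSum χ⁻¹ ψ * gaussSum (χ⁻¹ * φ) ψ) := by
    rw [← HD, inv_pow]
  have h4 : IsUnit (4 : F) := by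
    rw [show (4 : F) = 2 ^ 2 by norm_num]
    exact (pow_ne_zero 2 (Ring.two_ne_zero hF)).isUnit
  have e4 : χ 4 * χ⁻¹ 4 = 1 := by
    rw [← MulChar.mul_apply, mul_inv_cancel, MulChar.one_apply h4]
  have hg := gaussSum_ne_zero_of_addChar_ne_one hψ
  rw [gaussQuotient, div_eq_div_iff (mul_ne_zero (mul_ne_zero (hg _) (hg _)) (hg _))
    (mul_ne_zero (hg _) (hg _))]
  apply mul_right_cancel₀ (hg φ)
  calc _ = gaussSum (χ ^ 4) ψ * gaussSum φ ψ * (gaussSum ((χ ^ 6)⁻¹) ψ * gaussSum φ ψ) *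
        (gaussSum χ⁻¹ ψ * gaussSum (χ⁻¹ * φ) ψ) := by ring
    _ = (χ 4 * χ⁻¹ 4) ^ 2 * (gaussSum (χ ^ 2) ψ * gaussSum (χ ^ 2 * φ) ψ *
        gaussSum ((χ ^ 3)⁻¹) ψ * gaussSum ((χ ^ 3)⁻¹ * φ) ψ) *
        (χ⁻¹ 4 * (gaussSum χ⁻¹ ψ * gaussSum (χ⁻¹ * φ) ψ)) := by rw [e1, e2]; ring
    _ = _ := by rw [e4, ← e3]; ring

theorem gaussQuotient_eq_of_ne (hF : ringChar F ≠ 2) (hψ : ψ ≠ 1) {χ : MulChar F ℂ}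
    (hχ : χ ≠ φ) :
    gaussQuotient ψ χ = φ (-1) * χ (-1) * twistedGaussProduct ψ χ / (q * gaussSum φ ψ) := by
  have hξ : χ⁻¹ * φ ≠ 1 := by
    rw [Ne, mul_eq_one_iff_eq_inv, inv_inj]
    exact hχ
  have e := gaussSum_mul_gaussSum_inv hψ hξ
  rw [mul_inv, inv_inv, complexQuadraticChar_inv, MulChar.mul_apply, MulChar.inv_apply',
    inv_neg_one] at e
  have hχ1 : χ (-1) ^ 2 = 1 := by rw [← map_pow, neg_one_sq, map_one]
  have hφ1 : φ (-1) ^ 2 = 1 := by rw [← map_pow, neg_one_sq, map_one]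
  have hg := gaussSum_ne_zero_of_addChar_ne_one hψ
  rw [gaussQuotient_eq hF hψ, twistedGaussProduct, div_eq_div_iff (mul_ne_zero (hg _) (hg _))
    (mul_ne_zero (Nat.cast_ne_zero.mpr Fintype.card_ne_zero) (hg _))]
  linear_combination
    -(φ (-1) * χ (-1) * gaussSum φ ψ * gaussSum (χ ^ 2 * φ) ψ * gaussSum ((χ ^ 3)⁻¹ * φ) ψ) * e -
    q * gaussSum φ ψ * gaussSum (χ ^ 2 * φ) ψ * gaussSum ((χ ^ 3)⁻¹ * φ) ψ * hχ1 -
    q * gaussSum φ ψ * gaussSum (χ ^ 2 * φ) ψ * gaussSum ((χ ^ 3)⁻¹ * φ) ψ * χ (-1) ^ 2 * hφ1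

end GaussQuotient

section CharacterSum

lemma mulChar_apply_mul_twistedGaussProduct (χ : MulChar F ℂ) (a : F) :
    χ a * twistedGaussProduct ψ χ =
      ∑ y, ∑ z, ∑ x, χ (a * y ^ 2 * (z ^ 3)⁻¹ * x) * (φ x * φ y * φ z * ψ (x + y + z)) := by
  simp only [twistedGaussProduct, gaussSum, mul_sum, sum_mul]
  conv_lhs => rw [sum_comm]
  refine sum_congr rfl fun y _ ↦ sum_congr rfl fun z _ ↦ sum_congr rfl fun x _ ↦ ?_
  simp only [MulChar.mul_apply, MulChar.inv_apply']
  simp only [MulChar.pow_apply' χ two_ne_zero, MulChar.pow_apply' χ three_ne_zero, map_mul,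
    map_pow, ← inv_pow, AddChar.map_add_eq_mul]
  ring

lemma sum_complexQuadraticChar_cubic_slice (a y : F) :
    ∑ z, φ (a * y ^ 2 * (z ^ 3)⁻¹)⁻¹ * φ y * φ z * ψ ((a * y ^ 2 * (z ^ 3)⁻¹)⁻¹ + y + z) =
      ∑ w, φ a * φ w ^ 2 * (φ y * ψ ((1 + w + a⁻¹ * w ^ 3) * y)) := by
  rcases eq_or_ne y 0 with rfl | hy
  · simp [MulChar.map_zero]
  refine (Fintype.sum_equiv (Equiv.mulLeft₀ y hy) _ _ fun w ↦ ?_).symm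
  have hx : (a * y ^ 2 * ((y * w) ^ 3)⁻¹)⁻¹ = a⁻¹ * w ^ 3 * y := by
    simp only [mul_inv, inv_inv, mul_pow]
    field_simp
  rw [Equiv.mulLeft₀_apply, hx,
    show a⁻¹ * w ^ 3 * y + y + y * w = (1 + w + a⁻¹ * w ^ 3) * y by ring]
  simp only [map_mul, map_pow, complexQuadraticChar_apply_inv]
  linear_combination -(φ a * φ w * φ y ^ 3 * ψ ((1 + w + a⁻¹ * w ^ 3) * y)) *
      complexQuadraticChar_apply_pow_three w -
    (φ a * φ w ^ 2 * ψ ((1 + w + a⁻¹ * w ^ 3) * y)) * complexQuadraticChar_apply_pow_three y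

lemma sum_mulChar_apply_mul_twistedGaussProduct [Fintype (MulChar F ℂ)]
    (hF : ringChar F ≠ 2) (a : F) :
    ∑ χ : MulChar F ℂ, χ a * twistedGaussProduct ψ χ =
      (q - 1) * φ a * gaussSum φ ψ * ∑ w, φ w ^ 2 * φ (1 + w + a⁻¹ * w ^ 3) := by
  have horth (u : F) : ∑ χ : MulChar F ℂ, χ u = if u = 1 then q - 1 else 0 := by
    rw [MulChar.sum_apply_eq_ite, Nat.card_eq_fintype_card, Fintype.card_units,
      Nat.cast_sub Fintype.card_pos, Nat.cast_one]
  calc _ = ∑ y, ∑ z, ∑ x, (∑ χ : MulChar F ℂ, χ (a * y ^ 2 * (z ^ 3)⁻¹ * x)) *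
          (φ x * φ y * φ z * ψ (x + y + z)) := by
        simp only [mulChar_apply_mul_twistedGaussProduct, sum_mul]
        rw [sum_comm]
        refine sum_congr rfl fun y _ ↦ ?_
        rw [sum_comm]
        exact sum_congr rfl fun z _ ↦ sum_comm
    _ = ∑ y, ∑ z, (q - 1) * (φ (a * y ^ 2 * (z ^ 3)⁻¹)⁻¹ * φ y * φ z *
          ψ ((a * y ^ 2 * (z ^ 3)⁻¹)⁻¹ + y + z)) := by
        simp only [horth, ite_mul, zero_mul]
        refine sum_congr rfl fun y _ ↦ sum_congr rfl fun z _ ↦ sum_ite_mul_eq_one _ ?_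
        simp [MulChar.map_zero]
    _ = (q - 1) * ∑ w, φ a * φ w ^ 2 * (φ (1 + w + a⁻¹ * w ^ 3) * gaussSum φ ψ) := by
        simp only [← mul_sum, sum_complexQuadraticChar_cubic_slice]
        rw [sum_comm]
        congr 1
        refine sum_congr rfl fun w _ ↦ ?_
        rw [← mul_sum, sum_mulChar_mul_addChar_mul (complexQuadraticChar_ne_one hF),
          complexQuadraticChar_inv]
    _ = _ := by
        rw [mul_sum, mul_sum]
        exact sum_congr rfl fun w _ ↦ by ring

lemma sum_complexQuadraticChar_sq_mul_apply (hF : ringChar F ≠ 2) (α : F) {β : F}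
    (hβ : β ≠ 0) :
    ∑ w, φ w ^ 2 * φ ((w - α) * (w - β) ^ 2) = -(φ (-α) + φ (β - α)) := by
  have hterm (w : F) : φ w ^ 2 * φ ((w - α) * (w - β) ^ 2) =
      φ (w - α) - (if w = 0 then φ (-α) else 0) - (if w = β then φ (β - α) else 0) := by
    rcases eq_or_ne w 0 with rfl | hw0
    · simp [hβ.symm, MulChar.map_zero]
    rcases eq_or_ne w β with rfl | hwβ
    · simp [hw0, MulChar.map_zero]
    rw [if_neg hw0, if_neg hwβ, complexQuadraticChar_apply_sq hw0,
      complexQuadraticChar_mul_sq _ (sub_ne_zero.mpr hwβ)]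
    ring
  have hshift : ∑ w, φ (w - α) = 0 :=
    (Fintype.sum_equiv (Equiv.subRight α) _ φ fun _ ↦ rfl).trans
      (MulChar.sum_eq_zero_of_ne_one (complexQuadraticChar_ne_one hF))
  simp only [hterm, sum_sub_distrib, sum_ite_eq', mem_univ, if_true, hshift]
  ring

lemma sum_mulChar_apply_mul_twistedGaussProduct_neg_27_div_4 [Fintype (MulChar F ℂ)]
    (hF : ringChar F ≠ 2) (h3 : (3 : F) ≠ 0) :
    ∑ χ : MulChar F ℂ, χ (-(27 / 4)) * twistedGaussProduct ψ χ =
      -(q - 1) * gaussSum φ ψ * φ (-1) * (φ 3 + φ 2) := by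
  have h2 : (2 : F) ≠ 0 := Ring.two_ne_zero hF
  have h4 : (4 : F) ≠ 0 := by simpa [show (4 : F) = 2 ^ 2 by norm_num] using h2
  have h9 : (9 : F) ≠ 0 := by simpa [show (9 : F) = 3 ^ 2 by norm_num] using h3
  have h27 : (27 : F) ≠ 0 := by simpa [show (27 : F) = 3 ^ 3 by norm_num] using h3
  have h32 : (3 / 2 : F) ≠ 0 := div_ne_zero h3 h2
  have hcubic (w : F) : 1 + w + (-(27 / 4))⁻¹ * w ^ 3 =
      -3 * (2 / 9) ^ 2 * ((w - 3) * (w - -(3 / 2)) ^ 2) := by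
    field_simp
    ring
  have hsum : ∑ w, φ w ^ 2 * φ (1 + w + (-(27 / 4))⁻¹ * w ^ 3) =
      φ (-3) * -(φ (-3) + φ (-2)) := by
    simp only [hcubic, map_mul φ (-3 * _), complexQuadraticChar_mul_sq _ (div_ne_zero h2 h9),
      mul_left_comm _ (φ (-3)), ← mul_sum,
      sum_complexQuadraticChar_sq_mul_apply hF 3 (neg_ne_zero.mpr h32)]
    rw [show -(3 / 2) - 3 = -2 * (3 / 2 : F) ^ 2 by field_simp; ring,
      complexQuadraticChar_mul_sq _ h32]
  have hneg3 : φ (-3) ^ 2 = 1 := complexQuadraticChar_apply_sq (neg_ne_zero.mpr h3)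
  have hm3 : φ (-3) = φ (-1) * φ 3 := by rw [← map_mul, neg_one_mul]
  have hm2 : φ (-2) = φ (-1) * φ 2 := by rw [← map_mul, neg_one_mul]
  rw [sum_mulChar_apply_mul_twistedGaussProduct hF, hsum,
    show -(27 / 4) = -3 * (3 / 2 : F) ^ 2 by field_simp; ring, complexQuadraticChar_mul_sq _ h32]
  rw [hm3] at hneg3
  rw [hm3, hm2]
  linear_combination (-(q - 1) * gaussSum φ ψ * (φ (-1) * φ 3 + φ (-1) * φ 2)) * hneg3

theorem sum_gaussQuotient_mul_apply_27_div_4 [Fintype (MulChar F ℂ)] (hF : ringChar F ≠ 2)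
    (h3 : (3 : F) ≠ 0) (hψ : ψ ≠ 1) :
    ∑ χ : MulChar F ℂ, gaussQuotient ψ χ * χ (27 / 4) = -((q - 1) / q) * φ 2 := by
  have hq : q ≠ 0 := Nat.cast_ne_zero.mpr Fintype.card_ne_zero
  have hg : gaussSum φ ψ ≠ 0 := gaussSum_ne_zero_of_addChar_ne_one hψ φ
  have hC (χ : MulChar F ℂ) (hχ : χ ≠ φ) : gaussQuotient ψ χ * χ (27 / 4) =
      φ (-1) / (q * gaussSum φ ψ) * (χ (-(27 / 4)) * twistedGaussProduct ψ χ) := by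
    rw [gaussQuotient_eq_of_ne hF hψ hχ, ← neg_one_mul (27 / 4 : F), map_mul]
    ring
  have hQφ : gaussQuotient ψ φ = 1 := by
    simp only [gaussQuotient_eq hF hψ, pow_succ, pow_zero, one_mul, complexQuadraticChar_mul_self,
      complexQuadraticChar_inv]
    exact div_self (mul_ne_zero hg (gaussSum_ne_zero_of_addChar_ne_one hψ 1))
  have hTφ : twistedGaussProduct ψ φ = gaussSum φ ψ := by
    simp only [twistedGaussProduct, pow_succ, pow_zero, one_mul, complexQuadraticChar_mul_self,
      complexQuadraticChar_inv, gaussSum_one_left hψ]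
    ring
  have h32 : (3 / 2 : F) ≠ 0 := div_ne_zero h3 (Ring.two_ne_zero hF)
  have h274 : φ (27 / 4) = φ 3 := by
    rw [show (27 / 4 : F) = 3 * (3 / 2) ^ 2 by field_simp; ring, complexQuadraticChar_mul_sq _ h32]
  have hneg : φ (-(27 / 4)) = φ (-1) * φ 3 := by rw [← h274, ← map_mul, neg_one_mul]
  have hφ1 : φ (-1) ^ 2 = 1 := complexQuadraticChar_apply_sq (neg_ne_zero.mpr one_ne_zero)
  rw [← add_sum_erase _ _ (mem_univ φ), sum_congr rfl fun χ hχ ↦ hC χ (ne_of_mem_erase hχ),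
    sum_erase_eq_sub (mem_univ φ), ← mul_sum,
    sum_mulChar_apply_mul_twistedGaussProduct_neg_27_div_4 hF h3, hQφ, hTφ, hneg, h274]
  field_simp
  linear_combination (φ 2 - q * (φ 2 + φ 3)) * hφ1

end CharacterSum

end FiniteField

/-- The character-sum identity `p · H_p({1/4,3/4},{1/6,5/6};1) = (2/p)`:
`(p/(1-p)) ∑_χ g(χ⁴)g(χ⁻¹)g(χ⁻⁶)/(g(χ²)g(χ⁻²)g(χ⁻³)) · χ(27/4)` equals the Legendre
symbol of `2` mod `p`, for every prime `p > 3`. -/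
theorem stmt19 (p : ℕ) [Fact p.Prime] (hp : 3 < p)
    (ψ : AddChar (ZMod p) ℂ) (hψ : ψ ≠ 1) :
    ((p : ℂ) / (1 - (p : ℂ))) * ∑ χ : MulChar (ZMod p) ℂ,
        (gaussSum (χ ^ 4) ψ * gaussSum χ⁻¹ ψ * gaussSum ((χ ^ 6)⁻¹) ψ) /
          (gaussSum (χ ^ 2) ψ * gaussSum ((χ ^ 2)⁻¹) ψ * gaussSum ((χ ^ 3)⁻¹) ψ) *
          χ ((27 : ZMod p) / 4) =
      (legendreSym p 2 : ℂ) := by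
  have hF : ringChar (ZMod p) ≠ 2 := by
    rw [ZMod.ringChar_zmod_n]
    omega
  have h3 : ((3 : ℕ) : ZMod p) ≠ 0 := by
    rw [Ne, ZMod.natCast_eq_zero_iff]
    exact fun h ↦ absurd (Nat.le_of_dvd three_pos h) (by omega)
  have hp0 : (p : ℂ) ≠ 0 := by exact_mod_cast (by omega : p ≠ 0)
  have hp1 : (1 : ℂ) - p ≠ 0 := sub_ne_zero.mpr (by exact_mod_cast (by omega : 1 ≠ p))
  have hsum := sum_gaussQuotient_mul_apply_27_div_4 hF (by exact_mod_cast h3) hψ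
  have hlegendre : (legendreSym p 2 : ℂ) = complexQuadraticChar (ZMod p) 2 := by
    rw [legendreSym, complexQuadraticChar, MulChar.ringHomComp_apply, eq_intCast, Int.cast_ofNat]
  rw [ZMod.card] at hsum
  change (p : ℂ) / (1 - p) * ∑ χ : MulChar (ZMod p) ℂ, gaussQuotient ψ χ * χ (27 / 4) = _
  rw [hsum, hlegendre]
  field_simp
  ring
end
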